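/- For positive semidefinite matrices A, B and any s ∈ [0,1], one has Tr(A) - Tr((A-B)₊) ≤ Tr(A^s B^{1-s}), where (A-B)₊ denotes the positive part of A-B. Equivalently, Tr(A^{1-s} B^s) + Tr(A^s B^{1-s}) ≥ Tr(A) + Tr(B) - ‖A-B‖₁ in the symmetric form; in particular with Tr(A+B)=1, 1 - ‖A-B‖₁ ≤ 2 Tr(A^s B^{1-s}). -/

import Mathlib

open Matrix
open scoped ComplexOrder

/-- Trace norm `‖X‖₁ = Tr √(XᴴX)`. -/
noncomputable def traceNorm {n : Type*} [Fintype n] [DecidableEq n] (X : Matrix n n ℂ) : ℝ :=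
  (((Matrix.posSemidef_conjTranspose_mul_self X).1.eigenvectorUnitary : Matrix n n ℂ) *
    diagonal (((↑) : ℝ → ℂ) ∘ Real.sqrt ∘ (Matrix.posSemidef_conjTranspose_mul_self X).1.eigenvalues) *
    (star (Matrix.posSemidef_conjTranspose_mul_self X).1.eigenvectorUnitary : Matrix n n ℂ)).trace.re

/-- Fractional power `A^s` of a positive semidefinite matrix, defined spectrally with the
convention `0 ^ s = 0` for all real `s`. -/
noncomputable def Matrix.PosSemidef.rpow {n : Type*} [Fintype n] [DecidableEq n]
    {A : Matrix n n ℂ} (hA : A.PosSemidef) (s : ℝ) : Matrix n n ℂ :=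
  hA.1.cfc (fun x => if x = 0 then 0 else x ^ s)

/-- Matrix logarithm of a positive semidefinite matrix, defined spectrally with the
convention `log 0 = 0` on the kernel. -/
noncomputable def Matrix.PosSemidef.log {n : Type*} [Fintype n] [DecidableEq n]
    {A : Matrix n n ℂ} (hA : A.PosSemidef) : Matrix n n ℂ :=
  hA.1.cfc Real.log

/-! With `P = (A - B)⁺` one has `A ≤ M` and `B ≤ M` for `M = B + P`. For `0 < s < 1`, operator
monotonicity of `x ↦ x ^ s` and `x ↦ x ^ (1 - s)`, together with `0 ≤ Tr (X Y)` for `X, Y ≥ 0`,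
gives `Tr A = Tr A^s A^(1-s) ≤ Tr A^s M^(1-s)`, then
`Tr A^s (M^(1-s) - B^(1-s)) ≤ Tr M^s (M^(1-s) - B^(1-s))` and `Tr B ≤ Tr M^s B^(1-s)`; as
`Tr M = Tr B + Tr P`, these add up to `Tr A - Tr A^s B^(1-s) ≤ Tr P`. At `s ∈ {0, 1}` the
convention `0 ^ 0 = 0` makes one factor a support projection, and the bound follows by continuity
in `s`. Exchanging `A` and `B` (with `P = (A - B)⁻`) and adding gives the trace-norm form, since
`‖A - B‖₁ = Tr (A - B)⁺ + Tr (A - B)⁻`. -/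

open scoped MatrixOrder Matrix.Norms.L2Operator
open Set

namespace Matrix

variable {n : Type*} [Fintype n] [DecidableEq n]

lemma trace_mul_nonneg {X Y : Matrix n n ℂ} (hX : 0 ≤ X) (hY : 0 ≤ Y) : 0 ≤ (X * Y).trace := by
  obtain ⟨c, rfl⟩ := CStarAlgebra.nonneg_iff_eq_star_mul_self.mp hX
  rw [mul_assoc, trace_mul_comm]
  exact (nonneg_iff_posSemidef.mp (star_right_conjugate_nonneg hY c)).trace_nonneg

lemma re_trace_mul_le_re_trace_mul_of_le_right {X Y Z : Matrix n n ℂ} (hX : 0 ≤ X) (hYZ : Y ≤ Z) :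
    (X * Y).trace.re ≤ (X * Z).trace.re := by
  have := Complex.nonneg_iff.mp (trace_mul_nonneg hX (sub_nonneg.mpr hYZ)) |>.1
  rwa [mul_sub, trace_sub, Complex.sub_re, sub_nonneg] at this

lemma re_trace_mul_le_re_trace_mul_of_le_left {X Y Z : Matrix n n ℂ} (hXY : X ≤ Y) (hZ : 0 ≤ Z) :
    (X * Z).trace.re ≤ (Y * Z).trace.re := by
  rw [trace_mul_comm X, trace_mul_comm Y]
  exact re_trace_mul_le_re_trace_mul_of_le_right hZ hXY

namespace PosSemidef

variable {A B : Matrix n n ℂ}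

lemma rpow_eq_cfc (hA : A.PosSemidef) (s : ℝ) :
    hA.rpow s = cfc (fun x : ℝ => if x = 0 then 0 else x ^ s) A :=
  (hA.1.cfc_eq _).symm

lemma rpow_nonneg (hA : A.PosSemidef) (s : ℝ) : 0 ≤ hA.rpow s := by
  rw [rpow_eq_cfc]
  refine cfc_nonneg fun x hx => ?_
  split_ifs
  · rfl
  · exact Real.rpow_nonneg (spectrum_nonneg_of_nonneg hA.nonneg hx) s

lemma rpow_mul_rpow (hA : A.PosSemidef) (s t : ℝ) : hA.rpow s * hA.rpow t = hA.rpow (s + t) := by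
  rw [rpow_eq_cfc, rpow_eq_cfc, rpow_eq_cfc,
    ← cfc_mul _ _ A (A.finite_real_spectrum.continuousOn _) (A.finite_real_spectrum.continuousOn _)]
  refine cfc_congr fun x hx => ?_
  split_ifs with h
  · simp
  · exact (Real.rpow_add ((spectrum_nonneg_of_nonneg hA.nonneg hx).lt_of_ne' h) s t).symm

lemma rpow_one (hA : A.PosSemidef) : hA.rpow 1 = A := by
  rw [rpow_eq_cfc]
  conv_rhs => rw [← cfc_id' ℝ A]
  exact cfc_congr fun x _ => by split_ifs with h <;> simp [h]

lemma rpow_eq_cfc_rpow (hA : A.PosSemidef) {s : ℝ} (hs : 0 < s) : hA.rpow s = A ^ s := by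
  rw [rpow_eq_cfc, CFC.rpow_eq_cfc_real hA.nonneg]
  exact cfc_congr fun x _ => by split_ifs with h <;> simp [h, Real.zero_rpow hs.ne']

lemma rpow_le_rpow (hA : A.PosSemidef) (hB : B.PosSemidef) (hAB : A ≤ B) {s : ℝ}
    (hs : s ∈ Ioc 0 1) : hA.rpow s ≤ hB.rpow s := by
  rw [hA.rpow_eq_cfc_rpow hs.1, hB.rpow_eq_cfc_rpow hs.1]
  exact CFC.rpow_le_rpow ⟨hs.1.le, hs.2⟩ hAB

lemma rpow_mul_rpow_one_sub (hA : A.PosSemidef) (s : ℝ) : hA.rpow s * hA.rpow (1 - s) = A := by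
  rw [rpow_mul_rpow, add_sub_cancel, rpow_one]

lemma continuous_rpow (hA : A.PosSemidef) : Continuous hA.rpow := by
  unfold rpow IsHermitian.cfc
  simp only [Unitary.conjStarAlgAut_apply]
  refine (continuous_const.matrix_mul (Continuous.matrix_diagonal ?_)).matrix_mul continuous_const
  refine continuous_pi fun i => Complex.continuous_ofReal.comp ?_
  by_cases h : hA.1.eigenvalues i = 0
  · simp only [Function.comp_apply, h, if_true]
    exact continuous_const
  · simp only [Function.comp_apply, h, if_false]
    exact continuous_const.rpow continuous_id (fun _ => Or.inl h)

lemma continuous_re_trace_rpow_mul_rpow (hA : A.PosSemidef) (hB : B.PosSemidef) :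
    Continuous fun s => (hA.rpow s * hB.rpow (1 - s)).trace.re :=
  Complex.continuous_re.comp <| continuous_id.matrix_trace.comp <|
    hA.continuous_rpow.matrix_mul (hB.continuous_rpow.comp (continuous_const.sub continuous_id))

end PosSemidef

variable {A B P : Matrix n n ℂ}

lemma re_trace_sub_le_re_trace_rpow_mul_rpow_of_mem_Ioo (hA : A.PosSemidef) (hB : B.PosSemidef)
    (hP : 0 ≤ P) (hABP : A ≤ B + P) {s : ℝ} (hs : s ∈ Ioo 0 1) :
    A.trace.re - P.trace.re ≤ (hA.rpow s * hB.rpow (1 - s)).trace.re := by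
  set M := B + P
  have hM : M.PosSemidef := hB.add (nonneg_iff_posSemidef.mp hP)
  have hBM : B ≤ M := le_add_of_nonneg_right hP
  have hs' : s ∈ Ioc 0 1 := ⟨hs.1, hs.2.le⟩
  have ht : 1 - s ∈ Ioc 0 1 := ⟨sub_pos.mpr hs.2, by linarith [hs.1]⟩
  have hA_trace : A.trace.re ≤ (hA.rpow s * hM.rpow (1 - s)).trace.re := by
    conv_lhs => rw [← hA.rpow_mul_rpow_one_sub s]
    exact re_trace_mul_le_re_trace_mul_of_le_right (hA.rpow_nonneg s)
      (hA.rpow_le_rpow hM hABP ht)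
  have hcross : (hA.rpow s * (hM.rpow (1 - s) - hB.rpow (1 - s))).trace.re
      ≤ (hM.rpow s * (hM.rpow (1 - s) - hB.rpow (1 - s))).trace.re :=
    re_trace_mul_le_re_trace_mul_of_le_left (hA.rpow_le_rpow hM hABP hs')
      (sub_nonneg.mpr (hB.rpow_le_rpow hM hBM ht))
  have hB_trace : B.trace.re ≤ (hM.rpow s * hB.rpow (1 - s)).trace.re := by
    conv_lhs => rw [← hB.rpow_mul_rpow_one_sub s]
    exact re_trace_mul_le_re_trace_mul_of_le_left (hB.rpow_le_rpow hM hBM hs')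
      (hB.rpow_nonneg (1 - s))
  simp only [mul_sub, trace_sub, Complex.sub_re, hM.rpow_mul_rpow_one_sub s] at hcross
  simp only [M, trace_add, Complex.add_re] at hcross
  linarith

lemma re_trace_sub_le_re_trace_rpow_mul_rpow (hA : A.PosSemidef) (hB : B.PosSemidef)
    (hP : 0 ≤ P) (hABP : A ≤ B + P) {s : ℝ} (hs : s ∈ Icc 0 1) :
    A.trace.re - P.trace.re ≤ (hA.rpow s * hB.rpow (1 - s)).trace.re := by
  have hclosed : IsClosed {s | A.trace.re - P.trace.re ≤ (hA.rpow s * hB.rpow (1 - s)).trace.re} :=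
    isClosed_le continuous_const (hA.continuous_re_trace_rpow_mul_rpow hB)
  rw [← closure_Ioo zero_ne_one] at hs
  exact hclosed.closure_subset_iff.mpr
    (fun _ ht => re_trace_sub_le_re_trace_rpow_mul_rpow_of_mem_Ioo hA hB hP hABP ht) hs

lemma _root_.traceNorm_eq_re_trace_abs (X : Matrix n n ℂ) :
    traceNorm X = (CFC.abs X).trace.re := by
  rw [CFC.abs, CFC.sqrt_eq_real_sqrt _ (star_mul_self_nonneg X), star_eq_conjTranspose,
    cfcₙ_eq_cfc, (posSemidef_conjTranspose_mul_self X).1.cfc_eq]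
  rfl

lemma IsHermitian.cfc_max_zero_eq_posPart {X : Matrix n n ℂ} (hX : X.IsHermitian) :
    hX.cfc (fun x => max x 0) = X⁺ := by
  rw [← hX.cfc_eq, CFC.posPart_def, cfcₙ_eq_cfc]
  rfl

end Matrix

/-- For positive semidefinite `A`, `B` and `s ∈ [0,1]`:
`Tr A - Tr (A-B)₊ ≤ Tr (A^s B^{1-s})`; in particular, if `Tr(A+B) = 1` then
`1 - ‖A-B‖₁ ≤ 2 Tr (A^s B^{1-s})`. -/
theorem stmt0 {n : Type*} [Fintype n] [DecidableEq n]
    {A B : Matrix n n ℂ} (hA : A.PosSemidef) (hB : B.PosSemidef)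
    {s : ℝ} (hs : s ∈ Set.Icc (0:ℝ) 1) :
    A.trace.re - (((hA.1.sub hB.1).cfc (fun x => max x 0)).trace).re
      ≤ ((hA.rpow s * hB.rpow (1 - s)).trace).re ∧
    (A.trace + B.trace = 1 →
      1 - traceNorm (A - B) ≤ 2 * ((hA.rpow s * hB.rpow (1 - s)).trace).re) := by
  have hAB : IsSelfAdjoint (A - B) := hA.1.sub hB.1
  have hsum : B + (A - B)⁺ = A + (A - B)⁻ := by
    rw [sub_eq_iff_eq_add.mp (CFC.posPart_sub_negPart (A - B) hAB)]
    abel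
  have hA_le : A ≤ B + (A - B)⁺ := hsum ▸ le_add_of_nonneg_right (CFC.negPart_nonneg _)
  have hB_le : B ≤ A + (A - B)⁻ := hsum ▸ le_add_of_nonneg_right (CFC.posPart_nonneg _)
  rw [(hA.1.sub hB.1).cfc_max_zero_eq_posPart]
  have hA_bound :=
    Matrix.re_trace_sub_le_re_trace_rpow_mul_rpow hA hB (CFC.posPart_nonneg _) hA_le hs
  refine ⟨hA_bound, fun htr => ?_⟩
  have hB_bound :=
    Matrix.re_trace_sub_le_re_trace_rpow_mul_rpow hB hA (CFC.negPart_nonneg _) hB_le (s := 1 - s)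
      ⟨sub_nonneg.mpr hs.2, sub_le_self 1 hs.1⟩
  rw [sub_sub_cancel, trace_mul_comm] at hB_bound
  have hnorm : traceNorm (A - B) = ((A - B)⁺).trace.re + ((A - B)⁻).trace.re := by
    rw [traceNorm_eq_re_trace_abs, ← CFC.posPart_add_negPart _ hAB, trace_add, Complex.add_re]
  have htr_re : A.trace.re + B.trace.re = 1 := by simpa using congrArg Complex.re htr
  linarith
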